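/- The set of hypergeometric-type sequences over a field K of characteristic zero, restricted to sequences of the form s(n) = Σ_{i=1}^{l} c_i · r_i^n · χ_{j_i, m_i}(n) with c_i, r_i ∈ K (geometric coefficients), is closed under pointwise multiplication: the product of two such sequences is again of this form. -/
import Mathlib


/-- A sequence is geometric-hypergeometric-type if it is a finite linear combination
of terms `c * r ^ n * χ_{j,m}(n)` with `0 < m` and `j < m`. -/
def IsGeomHTS {K : Type*} [Field K] (s : ℕ → K) : Prop :=
  ∃ (l : ℕ) (c r : Fin l → K) (m j : Fin l → ℕ),
    (∀ i, 0 < m i) ∧ (∀ i, j i < m i) ∧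
    ∀ n, s n = ∑ i, c i * r i ^ n * (if n % m i = j i then (1 : K) else 0)

theorem geomHTS_mul {K : Type*} [Field K] [CharZero K] (s t : ℕ → K)
    (hs : IsGeomHTS s) (ht : IsGeomHTS t) :
    IsGeomHTS (fun n => s n * t n) := by
  classical
  obtain ⟨l, c, r, m, j, hm, hj, hsum⟩ := hs
  obtain ⟨l', c', r', m', j', hm', hj', htum⟩ := ht
  set T := Σ p : Fin l × Fin l', Fin (m p.1 * m' p.2) with hT
  let e : Fin (Fintype.card T) ≃ T := (Fintype.equivFin T).symm
  let C : T → K := fun x =>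
    if ((x.2 : ℕ) % m x.1.1 = j x.1.1 ∧ (x.2 : ℕ) % m' x.1.2 = j' x.1.2)
    then c x.1.1 * c' x.1.2 else 0
  let R : T → K := fun x => r x.1.1 * r' x.1.2
  let M : T → ℕ := fun x => m x.1.1 * m' x.1.2
  let J : T → ℕ := fun x => (x.2 : ℕ)
  refine ⟨Fintype.card T, fun i => C (e i), fun i => R (e i),
    fun i => M (e i), fun i => J (e i), ?_, ?_, ?_⟩
  · intro i; exact Nat.mul_pos (hm _) (hm' _)
  · intro i; exact (e i).2.isLt
  · intro n
    simp only [hsum n, htum n, Finset.sum_mul_sum]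
    rw [Equiv.sum_comp e
      (fun x : T => C x * R x ^ n * (if n % M x = J x then (1 : K) else 0))]
    rw [← Finset.univ_sigma_univ, Finset.sum_sigma, Fintype.sum_prod_type]
    refine Finset.sum_congr rfl fun i _ => Finset.sum_congr rfl fun i' _ => ?_
    have hMpos : 0 < m i * m' i' := Nat.mul_pos (hm i) (hm' i')
    have key : (∑ k : Fin (m i * m' i'),
        C ⟨(i, i'), k⟩ * R ⟨(i, i'), k⟩ ^ n *
          (if n % M ⟨(i, i'), k⟩ = J ⟨(i, i'), k⟩ then (1 : K) else 0)) =
        C ⟨(i, i'), ⟨n % (m i * m' i'), Nat.mod_lt n hMpos⟩⟩ *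
          R ⟨(i, i'), ⟨n % (m i * m' i'), Nat.mod_lt n hMpos⟩⟩ ^ n := by
      rw [Finset.sum_eq_single (⟨n % (m i * m' i'), Nat.mod_lt n hMpos⟩ :
          Fin (m i * m' i'))]
      · simp [M, J]
      · intro b _ hb
        have : ¬ (n % M ⟨(i, i'), b⟩ = J ⟨(i, i'), b⟩) := by
          simp only [M, J]
          intro h
          exact hb (Fin.ext h.symm)
        simp [this]
      · intro h; exact absurd (Finset.mem_univ _) h
    rw [key]
    have h1 : n % (m i * m' i') % m i = n % m i :=
      Nat.mod_mod_of_dvd n (dvd_mul_right _ _)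
    have h2 : n % (m i * m' i') % m' i' = n % m' i' :=
      Nat.mod_mod_of_dvd n (dvd_mul_left _ _)
    simp only [C, R, h1, h2]
    split_ifs <;> simp_all <;> ring
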